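/- (Quadratic Recurrence, part (b).) For every integer N ≥ 2 and every fixed β ∈ ℂ with Re(β) > −2/N, the function t ↦ F_N(t,β) is defined for all t ∈ ℝ, is infinitely differentiable (smooth) on ℝ, and is even: F_N(−t, β) = F_N(t, β) for all t ∈ ℝ. -/

import Mathlib

open MeasureTheory
open scoped LinearAlgebra.Projectivization

namespace LogCoulomb

noncomputable section

/-! ### The projective line over `ℚ_p`, its spherical metric and `PGL₂`-invariant measure -/

variable (p : ℕ) [Fact p.Prime]

instance : MeasurableSpace ℚ_[p] := borel _
instance : BorelSpace ℚ_[p] := ⟨rfl⟩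

/-- The projective line over `ℚ_p`. -/
abbrev P1 := ℙ ℚ_[p] (Fin 2 → ℚ_[p])

instance : TopologicalSpace (P1 p) :=
  inferInstanceAs (TopologicalSpace (Quotient _))

instance : MeasurableSpace (P1 p) := borel _
instance : BorelSpace (P1 p) := ⟨rfl⟩

/-- Spherical distance on homogeneous coordinates:
`δ((x₀,x₁),(y₀,y₁)) = |x₀y₁ - x₁y₀| / (max(|x₀|,|x₁|) ⬝ max(|y₀|,|y₁|))`. -/
def sdelta (x y : Fin 2 → ℚ_[p]) : ℝ :=
  ‖x 0 * y 1 - x 1 * y 0‖ / (max ‖x 0‖ ‖x 1‖ * max ‖y 0‖ ‖y 1‖)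

/-- The spherical metric on `ℙ¹(ℚ_p)`, defined via the canonical representatives. -/
def pdelta (ξ η : P1 p) : ℝ := sdelta p ξ.rep η.rep

open Classical in
/-- The action of a matrix on `ℙ¹(ℚ_p)`: `[x₀:x₁] ↦ [a x₀ + b x₁ : c x₀ + d x₁]`
(well-defined, and given by the first branch of the `if`, whenever `A` is invertible). -/
def mobius (A : Matrix (Fin 2) (Fin 2) ℚ_[p]) (ξ : P1 p) : P1 p :=
  if h : A.mulVec ξ.rep ≠ 0 then Projectivization.mk ℚ_[p] (A.mulVec ξ.rep) h else ξ

/-- `ν` is invariant under the action of `GL₂(ℤ_p)` on `ℙ¹(ℚ_p)`; membership of the matrix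
entries in `ℤ_p`, and invertibility of the matrix over `ℤ_p`, are phrased via the `p`-adic
norm on `ℚ_p`. -/
def IsGLInvariant (ν : Measure (P1 p)) : Prop :=
  ∀ A : Matrix (Fin 2) (Fin 2) ℚ_[p],
    (∀ i j, ‖A i j‖ ≤ 1) → ‖A.det‖ = 1 →
      ∀ M : Set (P1 p), MeasurableSet M → ν (mobius p A '' M) = ν M

/-- The embedding `ι : ℚ_p → ℙ¹(ℚ_p)`, `x ↦ [x : 1]`. -/
def iota (x : ℚ_[p]) : P1 p :=
  Projectivization.mk ℚ_[p] ![x, 1] (by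
    intro h
    have h1 := congrFun h 1
    simp at h1)

/-! ### Canonical partition functions -/

/-- The pairs `(i,j)` with `i < j`. -/
def pairs (N : ℕ) : Finset (Fin N × Fin N) := Finset.univ.filter fun q => q.1 < q.2

/-- The closed unit ball `ℤ_p = R` inside `ℚ_p`. -/
def Zball : Set ℚ_[p] := {x | ‖x‖ ≤ 1}

/-- The open unit ball `pℤ_p = P` inside `ℚ_p`. -/
def Pball : Set ℚ_[p] := {x | ‖x‖ < 1}

/-- The one-component canonical partition function
`Z_N(X, β) = ∫_{X^N} ∏_{i<j} |x_i - x_j|^β dμ^N` (as a Bochner integral, whether or not it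
converges absolutely). -/
def ZN (μ : Measure ℚ_[p]) [SigmaFinite μ] (X : Set ℚ_[p]) (N : ℕ) (β : ℂ) : ℂ :=
  ∫ x : Fin N → ℚ_[p], ∏ q ∈ pairs N, (‖x q.1 - x q.2‖ : ℂ) ^ β
    ∂(Measure.pi fun _ => μ.restrict X)

/-- The multivariate canonical partition function
`𝒵_I(X, s) = ∫_{X^I} ∏_{i<j, i,j ∈ I} |x_i - x_j|^{s_{ij}} dμ^I` for a subset `I ⊆ [N]`. -/
def ZI (μ : Measure ℚ_[p]) [SigmaFinite μ] (X : Set ℚ_[p]) {N : ℕ} (I : Finset (Fin N))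
    (s : Fin N → Fin N → ℂ) : ℂ :=
  ∫ x : I → ℚ_[p],
    ∏ q ∈ Finset.univ.filter (fun q : (↥I) × (↥I) => (q.1 : Fin N) < (q.2 : Fin N)),
      (‖x q.1 - x q.2‖ : ℂ) ^ s q.1.1 q.2.1
    ∂(Measure.pi fun _ => μ.restrict X)

/-- The multivariate canonical partition function
`𝒵_N(ℙ¹(ℚ_p), s) = ∫_{(ℙ¹(ℚ_p))^N} ∏_{i<j} δ(ξ_i,ξ_j)^{s_{ij}} dν^N`. -/
def ZP1s (ν : Measure (P1 p)) [SigmaFinite ν] (N : ℕ) (s : Fin N → Fin N → ℂ) : ℂ :=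
  ∫ x : Fin N → P1 p, ∏ q ∈ pairs N, ((pdelta p (x q.1) (x q.2) : ℝ) : ℂ) ^ s q.1 q.2
    ∂(Measure.pi fun _ => ν)

/-- The one-component canonical partition function `Z_N(ℙ¹(ℚ_p), β)`. -/
def ZP1 (ν : Measure (P1 p)) [SigmaFinite ν] (N : ℕ) (β : ℂ) : ℂ :=
  ∫ x : Fin N → P1 p, ∏ q ∈ pairs N, ((pdelta p (x q.1) (x q.2) : ℝ) : ℂ) ^ β
    ∂(Measure.pi fun _ => ν)

/-! ### The quadratic recurrence -/

/-- The factor `ρ_{N,k}(t,β)` appearing in the quadratic recurrence; here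
`N.choose 2 = N(N-1)/2`. -/
def rho (N k : ℕ) (t : ℝ) (β : ℂ) : ℂ :=
  if t = 0 then
    (((N : ℂ) + (N.choose 2 : ℂ) * β) * (1 - 2 * (k : ℂ) / (N : ℂ)) + 1) /
      (((N : ℂ) + (N.choose 2 : ℂ) * β) - 1)
  else
    Complex.sinh (((t : ℂ) / 2) * (((N : ℂ) + (N.choose 2 : ℂ) * β) * (1 - 2 * (k : ℂ) / (N : ℂ)) + 1)) /
      Complex.sinh (((t : ℂ) / 2) * (((N : ℂ) + (N.choose 2 : ℂ) * β) - 1))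

/-- The quadratic recurrence: `F 0 = F 1 = 1` and
`F N t β = ∑_{k=1}^{N-1} (k/N) ρ_{N,k}(t,β) F_{N-k}(t,β) F_k(t,β)` for `N ≥ 2`. -/
def F : ℕ → ℝ → ℂ → ℂ
  | 0, _, _ => 1
  | 1, _, _ => 1
  | N + 2, t, β =>
    ∑ k ∈ (Finset.Icc 1 (N + 1)).attach,
      (((k : ℕ) : ℂ) / ((N : ℂ) + 2)) * rho (N + 2) k t β *
        F (N + 2 - (k : ℕ)) t β * F (k : ℕ) t β
  decreasing_by
  all_goals
    have hk := Finset.mem_Icc.mp k.2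
    omega

/-! ### Splitting chains -/

/-- A splitting chain `Λ_0 > Λ_1 > ⋯ > Λ_L` of set partitions of the subset `I ⊆ [N]`,
beginning with the trivial partition `{I}` and ending with the partition of `I` into
singletons.  (The values `Λ ℓ` for `ℓ > L` are required to be `∅`, so that a chain is
determined by the genuine data `Λ_0, …, Λ_L`.) -/
structure SplChain (N : ℕ) (I : Finset (Fin N)) where
  L : ℕ
  Λ : ℕ → Finset (Finset (Fin N))
  nonempty_mem : ∀ ℓ ≤ L, ∀ B ∈ Λ ℓ, B.Nonempty
  subset_mem : ∀ ℓ ≤ L, ∀ B ∈ Λ ℓ, B ⊆ I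
  cover : ∀ ℓ ≤ L, ∀ i ∈ I, ∃! B, B ∈ Λ ℓ ∧ i ∈ B
  first : Λ 0 = {I}
  last : Λ L = I.image fun i => {i}
  refines : ∀ ℓ < L, ∀ B ∈ Λ (ℓ + 1), ∃ C ∈ Λ ℓ, B ⊆ C
  strict : ∀ ℓ < L, Λ (ℓ + 1) ≠ Λ ℓ
  trailing : ∀ ℓ, L < ℓ → Λ ℓ = ∅

variable {N : ℕ} {I : Finset (Fin N)}

/-- The branches of a splitting chain: the non-singleton parts,
`ℬ(𝔖) = (Λ_0 ∪ ⋯ ∪ Λ_{L-1}) \ Λ_L`. -/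
def SplChain.branches (S : SplChain N I) : Finset (Finset (Fin N)) :=
  ((Finset.range S.L).biUnion S.Λ) \ S.Λ S.L

/-- The depth `ℓ_𝔖(λ) = max {ℓ : λ ∈ Λ_ℓ}` of a branch. -/
def SplChain.depth (S : SplChain N I) (lam : Finset (Fin N)) : ℕ :=
  ((Finset.range (S.L + 1)).filter fun ℓ => lam ∈ S.Λ ℓ).sup id

/-- The degree `deg_𝔖(λ) = #{λ' ∈ Λ_{ℓ_𝔖(λ)+1} : λ' ⊆ λ}` of a branch. -/
def SplChain.degree (S : SplChain N I) (lam : Finset (Fin N)) : ℕ :=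
  ((S.Λ (S.depth lam + 1)).filter fun lam' => lam' ⊆ lam).card

/-- A splitting chain is reduced if every branch appears in exactly one partition of the
chain (namely the one at its depth). -/
def SplChain.Reduced (S : SplChain N I) : Prop :=
  ∀ lam ∈ S.branches, ∀ ℓ ≤ S.L, (lam ∈ S.Λ ℓ ↔ ℓ = S.depth lam)

/-- `e_λ(s) = #λ - 1 + ∑_{i<j, i,j ∈ λ} s_{ij}`. -/
def eexp (lam : Finset (Fin N)) (s : Fin N → Fin N → ℂ) : ℂ :=
  (lam.card : ℂ) - 1 + ∑ q ∈ (pairs N).filter fun q => q.1 ∈ lam ∧ q.2 ∈ lam, s q.1 q.2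

/-- Membership in `Ω_I`: `Re e_λ(s) > 0` for every `λ ⊆ I` with `#λ > 1`. -/
def InOmega (I : Finset (Fin N)) (s : Fin N → Fin N → ℂ) : Prop :=
  ∀ lam ⊆ I, 1 < lam.card → 0 < (eexp lam s).re


/-- The multivariate canonical partition function `𝒵_N(ℤ_p, s)` over `Fin N`-indexed tuples. -/
def ZNs (μ : Measure ℚ_[p]) [SigmaFinite μ] (X : Set ℚ_[p]) (N : ℕ)
    (s : Fin N → Fin N → ℂ) : ℂ :=
  ∫ x : Fin N → ℚ_[p], ∏ q ∈ pairs N, (‖x q.1 - x q.2‖ : ℂ) ^ s q.1 q.2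
    ∂(Measure.pi fun _ => μ.restrict X)

/-- The ball `p^v ℤ_p = {x : |x| ≤ p^{-v}}` in `ℚ_p`. -/
def pvball (v : ℤ) : Set ℚ_[p] := {x | ‖x‖ ≤ (p : ℝ) ^ (-v)}

/-- `G_N(q,β) = N! q^{(1/2)(N choose 2)β} F_N(log q, β)`. -/
def GN (N : ℕ) (β : ℂ) (q : ℝ) : ℂ :=
  (N.factorial : ℂ) * (q : ℂ) ^ ((N.choose 2 : ℂ) * β / 2) * F N (Real.log q) β

/-- `H_N(q,β)`, the efficient formula for `Z_N(ℙ¹(K),β)` as a function of `q`. -/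
def HN (N : ℕ) (β : ℂ) (q : ℝ) : ℂ :=
  (N.factorial : ℂ) * ∑ k ∈ Finset.range (N + 1),
    Complex.cosh (((Real.log q : ℂ) / 2) * ((N : ℂ) + (N.choose 2 : ℂ) * β) *
          (1 - 2 * (k : ℂ) / (N : ℂ))) /
        (2 * Complex.cosh ((Real.log q : ℂ) / 2)) ^ N *
      F (N - k) (Real.log q) β * F k (Real.log q) β

end

/-- `sinh z / z`, extended by `1` at `z = 0`. -/
noncomputable def sinhc (z : ℂ) : ℂ := if z = 0 then 1 else Complex.sinh z / z

lemma sinhc_zero : sinhc 0 = 1 := if_pos rfl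

lemma sinh_eq_sinhc (z : ℂ) : Complex.sinh z = z * sinhc z := by
  unfold sinhc
  split_ifs with h
  · simp [h]
  · field_simp

lemma continuousAt_sinhc_zero : ContinuousAt sinhc 0 := by
  rw [← continuousWithinAt_compl_self]
  have h : Filter.Tendsto (slope Complex.sinh 0) (nhdsWithin 0 {(0 : ℂ)}ᶜ) (nhds 1) := by
    have := hasDerivAt_iff_tendsto_slope.mp (Complex.hasDerivAt_sinh 0)
    simpa [Complex.cosh_zero] using this
  have heq : ∀ z : ℂ, z ≠ 0 → slope Complex.sinh 0 z = sinhc z := by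
    intro z hz
    simp [slope_def_field, sinhc, hz, Complex.sinh_zero]
  unfold ContinuousWithinAt
  rw [sinhc_zero]
  refine h.congr' ?_
  filter_upwards [self_mem_nhdsWithin] with z hz
  exact heq z hz

lemma analyticAt_sinhc_of_ne {z : ℂ} (hz : z ≠ 0) : AnalyticAt ℂ sinhc z := by
  have h1 : AnalyticAt ℂ (fun w => Complex.sinh w / w) z :=
    (Complex.differentiable_sinh.analyticAt z).div analyticAt_id hz
  apply h1.congr
  filter_upwards [isOpen_ne.mem_nhds hz] with w hw
  simp [sinhc, hw]

lemma analyticAt_sinhc (z : ℂ) : AnalyticAt ℂ sinhc z := by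
  rcases eq_or_ne z 0 with rfl | hz
  · refine Complex.analyticAt_of_differentiable_on_punctured_nhds_of_continuousAt ?_
      continuousAt_sinhc_zero
    filter_upwards [self_mem_nhdsWithin] with w hw
    exact (analyticAt_sinhc_of_ne hw).differentiableAt
  · exact analyticAt_sinhc_of_ne hz

lemma contDiff_sinhc_comp (a : ℂ) : ContDiff ℝ (⊤ : ℕ∞) (fun t : ℝ => sinhc ((t : ℂ) / 2 * a)) := by
  have h1 : ContDiff ℂ (⊤ : ℕ∞) sinhc :=
    contDiff_iff_contDiffAt.mpr fun z => (analyticAt_sinhc z).contDiffAt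
  have h2 : ContDiff ℝ (⊤ : ℕ∞) (fun t : ℝ => (t : ℂ) / 2 * a) := by
    have h3 : ContDiff ℝ (⊤ : ℕ∞) (fun t : ℝ => (t : ℂ)) := Complex.ofRealCLM.contDiff
    exact (h3.div_const 2).mul contDiff_const
  exact (h1.restrict_scalars ℝ).comp h2

lemma sinhc_ne_zero {z : ℂ} (hz : z.re ≠ 0) : sinhc z ≠ 0 := by
  have hz0 : z ≠ 0 := fun h => hz (by simp [h])
  have hs : Complex.sinh z ≠ 0 := by
    intro h
    apply hz
    have hexp : Complex.exp z = Complex.exp (-z) := by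
      have : (Complex.exp z - Complex.exp (-z)) / 2 = 0 := h
      field_simp at this
      linear_combination this
    have habs := congrArg (norm : ℂ → ℝ) hexp
    rw [Complex.norm_exp, Complex.norm_exp, Real.exp_eq_exp] at habs
    simp only [Complex.neg_re] at habs
    linarith
  simp only [sinhc, if_neg hz0]
  exact div_ne_zero hs hz0

lemma rho_eq_sinhc (N k : ℕ) (t : ℝ) (β : ℂ) :
    rho N k t β =
      ((((N : ℂ) + (N.choose 2 : ℂ) * β) * (1 - 2 * (k : ℂ) / (N : ℂ)) + 1) *
          sinhc ((t : ℂ) / 2 *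
            (((N : ℂ) + (N.choose 2 : ℂ) * β) * (1 - 2 * (k : ℂ) / (N : ℂ)) + 1))) /
      ((((N : ℂ) + (N.choose 2 : ℂ) * β) - 1) *
          sinhc ((t : ℂ) / 2 * (((N : ℂ) + (N.choose 2 : ℂ) * β) - 1))) := by
  set a : ℂ := ((N : ℂ) + (N.choose 2 : ℂ) * β) * (1 - 2 * (k : ℂ) / (N : ℂ)) + 1 with ha
  set b : ℂ := ((N : ℂ) + (N.choose 2 : ℂ) * β) - 1 with hb
  unfold rho
  split_ifs with h
  · subst h
    norm_num [sinhc_zero]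
    rfl
  · have ht : ((t : ℂ) / 2) ≠ 0 := by
      simp only [div_ne_zero_iff, Ne, Complex.ofReal_eq_zero]
      exact ⟨h, two_ne_zero⟩
    rw [sinh_eq_sinhc ((t : ℂ) / 2 * a), sinh_eq_sinhc ((t : ℂ) / 2 * b),
      mul_assoc, mul_assoc, mul_div_mul_left _ _ ht]

lemma rho_even (N k : ℕ) (β : ℂ) (t : ℝ) : rho N k (-t) β = rho N k t β := by
  rcases eq_or_ne t 0 with rfl | ht
  · norm_num
  · unfold rho
    rw [if_neg (neg_ne_zero.mpr ht), if_neg ht]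
    push_cast
    rw [neg_div, neg_mul, neg_mul, Complex.sinh_neg, Complex.sinh_neg, neg_div_neg_eq]

lemma contDiff_rho (N k : ℕ) (β : ℂ)
    (hb : 0 < (((N : ℂ) + (N.choose 2 : ℂ) * β) - 1).re) :
    ContDiff ℝ (⊤ : ℕ∞) fun t : ℝ => rho N k t β := by
  set a : ℂ := ((N : ℂ) + (N.choose 2 : ℂ) * β) * (1 - 2 * (k : ℂ) / (N : ℂ)) + 1 with ha
  set b : ℂ := ((N : ℂ) + (N.choose 2 : ℂ) * β) - 1 with hbdef
  have hb0 : b ≠ 0 := fun h => by rw [h] at hb; simp at hb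
  have h0 : ∀ t : ℝ, b * sinhc ((t : ℂ) / 2 * b) ≠ 0 := by
    intro t
    refine mul_ne_zero hb0 ?_
    rcases eq_or_ne t 0 with rfl | ht
    · norm_num [sinhc_zero]
    · apply sinhc_ne_zero
      have : (t : ℂ) / 2 * b = ((t / 2 : ℝ) : ℂ) * b := by push_cast; ring
      rw [this, Complex.re_ofReal_mul]
      exact mul_ne_zero (by simpa using ht) (ne_of_gt hb)
  have key : ∀ t : ℝ, rho N k t β =
      (a * sinhc ((t : ℂ) / 2 * a)) * (b * sinhc ((t : ℂ) / 2 * b))⁻¹ := by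
    intro t
    rw [rho_eq_sinhc, div_eq_mul_inv]
  simp only [key]
  exact (contDiff_const.mul (contDiff_sinhc_comp a)).mul
    ((contDiff_const.mul (contDiff_sinhc_comp b)).inv h0)

lemma F_aux (β : ℂ) : ∀ N : ℕ, (∀ M : ℕ, 2 ≤ M → M ≤ N → -2 / (M : ℝ) < β.re) →
    ContDiff ℝ (⊤ : ℕ∞) (fun t : ℝ => F N t β) ∧ ∀ t : ℝ, F N (-t) β = F N t β := by
  intro N
  induction N using Nat.strong_induction_on with
  | _ N ih =>
    match N with
    | 0 =>
      intro _
      exact ⟨by simpa [F] using (contDiff_const : ContDiff ℝ (⊤ : ℕ∞) fun _ : ℝ => (1 : ℂ)),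
        fun t => by simp [F]⟩
    | 1 =>
      intro _
      exact ⟨by simpa [F] using (contDiff_const : ContDiff ℝ (⊤ : ℕ∞) fun _ : ℝ => (1 : ℂ)),
        fun t => by simp [F]⟩
    | (n + 2) =>
      intro hM
      have hβ : -2 / ((n + 2 : ℕ) : ℝ) < β.re := hM (n + 2) (by omega) le_rfl
      have hb : 0 < ((((n + 2 : ℕ) : ℂ)) + (((n + 2).choose 2 : ℕ) : ℂ) * β - 1).re := by
        have hre : ((((n + 2 : ℕ) : ℂ)) + (((n + 2).choose 2 : ℕ) : ℂ) * β - 1).re =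
            ((n + 2 : ℕ) : ℝ) + (((n + 2).choose 2 : ℕ) : ℝ) * β.re - 1 := by
          simp [Complex.add_re, Complex.sub_re, Complex.mul_re]
        rw [hre, Nat.cast_choose_two]
        have h2 : (0 : ℝ) < ((n + 2 : ℕ) : ℝ) := by positivity
        rw [div_lt_iff₀ h2] at hβ
        have h05 : (0 : ℝ) < (((n + 2 : ℕ) : ℝ) - 1) / 2 := by
          have hn : (0:ℝ) ≤ (n:ℝ) := Nat.cast_nonneg n
          push_cast; linarith
        nlinarith [mul_lt_mul_of_pos_left hβ h05]
      -- smoothness and evenness of the summands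
      have hsub : ∀ k : ℕ, k ∈ Finset.Icc 1 (n + 1) →
          (ContDiff ℝ (⊤ : ℕ∞) (fun t : ℝ => F (n + 2 - k) t β) ∧
            ∀ t : ℝ, F (n + 2 - k) (-t) β = F (n + 2 - k) t β) ∧
          (ContDiff ℝ (⊤ : ℕ∞) (fun t : ℝ => F k t β) ∧
            ∀ t : ℝ, F k (-t) β = F k t β) := by
        intro k hk
        have hk' := Finset.mem_Icc.mp hk
        constructor
        · exact ih (n + 2 - k) (by omega) fun M h2 hle => hM M h2 (by omega)
        · exact ih k (by omega) fun M h2 hle => hM M h2 (by omega)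
      constructor
      · show ContDiff ℝ (⊤ : ℕ∞) fun t : ℝ => F (n + 2) t β
        simp only [F]
        apply ContDiff.sum
        intro k _
        have h1 := (hsub k k.2).1.1
        have h2 := (hsub k k.2).2.1
        exact ((contDiff_const.mul (contDiff_rho (n + 2) k β hb)).mul h1).mul h2
      · intro t
        show F (n + 2) (-t) β = F (n + 2) t β
        simp only [F]
        refine Finset.sum_congr rfl fun k _ => ?_
        rw [rho_even, (hsub k k.2).1.2, (hsub k k.2).2.2]

theorem statement_6 (N : ℕ) (hN : 2 ≤ N) (β : ℂ) (hβ : -2 / (N : ℝ) < β.re) :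
    ContDiff ℝ (⊤ : ℕ∞) (fun t : ℝ => F N t β) ∧ ∀ t : ℝ, F N (-t) β = F N t β := by
  apply F_aux β N
  intro M h2 hMN
  have hM0 : (0 : ℝ) < (M : ℝ) := by exact_mod_cast Nat.lt_of_lt_of_le (by omega) h2
  have hN0 : (0 : ℝ) < (N : ℝ) := by
    exact_mod_cast Nat.lt_of_lt_of_le (by omega) hN
  have h1 : (2 : ℝ) / (N : ℝ) ≤ 2 / (M : ℝ) :=
    div_le_div_of_nonneg_left (by norm_num) hM0 (by exact_mod_cast hMN)
  rw [neg_div] at hβ ⊢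
  linarith

end LogCoulomb
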